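/- The tetrahedron group G = ⟨w, a, b, c⟩ ≤ Aut T is infinite. -/

import Mathlib

universe u

namespace DicePaper

/-- Words of length `n` over the level-indexed sequence of alphabets `X`. -/
def Word (X : ℕ → Type u) : ℕ → Type u
  | 0 => PUnit
  | n + 1 => X 0 × Word (fun k => X (k + 1)) n

/-- An automorphism of the spherically homogeneous rooted tree with alphabets `X`,
encoded by its portrait: a permutation of the children alphabet at each vertex. -/
def TreeAut (X : ℕ → Type u) : Type u :=
  ∀ n, Word X n → Equiv.Perm (X n)

namespace TreeAut

/-- The section (state) of a tree automorphism at a first-level vertex. -/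
def sec {X : ℕ → Type u} (f : TreeAut X) (x : X 0) : TreeAut fun k => X (k + 1) :=
  fun n v => f (n + 1) (x, v)

/-- Action of a tree automorphism on the vertices (words). -/
def act : ∀ (X : ℕ → Type u), TreeAut X → ∀ n, Word X n → Word X n
  | _, _, 0, _ => PUnit.unit
  | X, f, n + 1, v => (f 0 PUnit.unit v.1, act (fun k => X (k + 1)) (f.sec v.1) n v.2)

/-- The inverse action on words. -/
def invAct : ∀ (X : ℕ → Type u), TreeAut X → ∀ n, Word X n → Word X n
  | _, _, 0, _ => PUnit.unit
  | X, f, n + 1, v =>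
    ((f 0 PUnit.unit)⁻¹ v.1,
      invAct (fun k => X (k + 1)) (f.sec ((f 0 PUnit.unit)⁻¹ v.1)) n v.2)

variable {X : ℕ → Type u}

instance : One (TreeAut X) := ⟨fun _ _ => 1⟩
instance : Mul (TreeAut X) := ⟨fun f g n v => f n (act X g n v) * g n v⟩
instance : Inv (TreeAut X) := ⟨fun f n v => (f n (invAct X f n v))⁻¹⟩

theorem one_apply (n : ℕ) (v : Word X n) : (1 : TreeAut X) n v = 1 := rfl
theorem mul_apply (f g : TreeAut X) (n : ℕ) (v : Word X n) :
    (f * g) n v = f n (act X g n v) * g n v := rfl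
theorem inv_apply (f : TreeAut X) (n : ℕ) (v : Word X n) :
    f⁻¹ n v = (f n (invAct X f n v))⁻¹ := rfl

theorem act_one : ∀ (n : ℕ) (X : ℕ → Type u) (v : Word X n), act X 1 n v = v
  | 0, _, _ => rfl
  | n + 1, X, v => by
    show ((1 : Equiv.Perm (X 0)) v.1, act _ (sec 1 v.1) n v.2) = v
    have : sec (1 : TreeAut X) v.1 = 1 := rfl
    rw [this, act_one n _ v.2]
    rfl

theorem sec_mul (f g : TreeAut X) (x : X 0) :
    sec (f * g) x = sec f (g 0 PUnit.unit x) * sec g x := rfl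

theorem act_mul : ∀ (n : ℕ) (X : ℕ → Type u) (f g : TreeAut X) (v : Word X n),
    act X (f * g) n v = act X f n (act X g n v)
  | 0, _, _, _, _ => rfl
  | n + 1, X, f, g, v => by
    show ((f * g) 0 PUnit.unit v.1, act _ (sec (f * g) v.1) n v.2) = _
    rw [sec_mul, act_mul n _ (sec f (g 0 PUnit.unit v.1)) (sec g v.1) v.2]
    rfl

theorem sec_inv (f : TreeAut X) (x : X 0) :
    sec f⁻¹ x = (sec f ((f 0 PUnit.unit)⁻¹ x))⁻¹ := by
  funext n v
  rfl

theorem act_invAct : ∀ (n : ℕ) (X : ℕ → Type u) (f : TreeAut X) (v : Word X n),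
    act X f n (invAct X f n v) = v
  | 0, _, _, _ => rfl
  | n + 1, X, f, v => by
    show (f 0 PUnit.unit ((f 0 PUnit.unit)⁻¹ v.1),
      act _ (sec f ((f 0 PUnit.unit)⁻¹ v.1)) n
        (invAct _ (sec f ((f 0 PUnit.unit)⁻¹ v.1)) n v.2)) = v
    rw [act_invAct n _ _ v.2]
    simp
    rfl

theorem invAct_act : ∀ (n : ℕ) (X : ℕ → Type u) (f : TreeAut X) (v : Word X n),
    invAct X f n (act X f n v) = v
  | 0, _, _, _ => rfl
  | n + 1, X, f, v => by
    show ((f 0 PUnit.unit)⁻¹ (f 0 PUnit.unit v.1),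
      invAct _ (sec f ((f 0 PUnit.unit)⁻¹ (f 0 PUnit.unit v.1))) n
        (act _ (sec f v.1) n v.2)) = v
    have h : (f 0 PUnit.unit)⁻¹ (f 0 PUnit.unit v.1) = v.1 := by simp
    rw [h, invAct_act n _ _ v.2]
    rfl

instance : Group (TreeAut X) where
  mul_assoc f g h := by
    funext n v
    show (f n (act X g n (act X h n v)) * g n (act X h n v)) * h n v
        = f n (act X (g * h) n v) * (g n (act X h n v) * h n v)
    rw [act_mul]
    exact mul_assoc _ _ _
  one_mul f := by
    funext n v
    show (1 : TreeAut X) n (act X f n v) * f n v = f n v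
    rw [one_apply, one_mul]
  mul_one f := by
    funext n v
    show f n (act X 1 n v) * (1 : TreeAut X) n v = f n v
    rw [act_one, one_apply, mul_one]
  inv_mul_cancel f := by
    funext n v
    show f⁻¹ n (act X f n v) * f n v = 1
    rw [inv_apply, invAct_act, inv_mul_cancel]

end TreeAut



/-- The alphabet `X = {0,…,7}` identified with `(ℤ/2)³` via binary digits. -/
abbrev V : Type := ZMod 2 × ZMod 2 × ZMod 2

/-- The rooted automorphism of the regular rooted tree over `V` determined by a
permutation of the alphabet: it permutes the first letter of every word. -/
def rooted (σ : Equiv.Perm V) : TreeAut fun _ => V :=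
  fun n _ => match n with
  | 0 => σ
  | _ + 1 => 1

/-- The rooted automorphism `a` (adding `1`, i.e. flipping the first binary digit). -/
def aAut : TreeAut fun _ => V := rooted (Equiv.addLeft ((1, 0, 0) : V))

/-- The rooted automorphism `b` (adding `2`, i.e. flipping the second binary digit). -/
def bAut : TreeAut fun _ => V := rooted (Equiv.addLeft ((0, 1, 0) : V))

/-- The rooted automorphism `c` (adding `4`, i.e. flipping the third binary digit). -/
def cAut : TreeAut fun _ => V := rooted (Equiv.addLeft ((0, 0, 1) : V))

/-- The portrait of the directed automorphism `w`: its first-level sections are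
`w` at `0`, `a` at `3 = (1,1,0)`, `b` at `5 = (1,0,1)`, `c` at `6 = (0,1,1)`,
and trivial elsewhere; `w` fixes the first level. -/
def wPerm : ∀ n, Word (fun _ => V) n → Equiv.Perm V
  | 0, _ => 1
  | n + 1, v =>
    if v.1 = (0 : V) then wPerm n v.2
    else
      match n with
      | 0 =>
        if v.1 = ((1, 1, 0) : V) then Equiv.addLeft ((1, 0, 0) : V)
        else if v.1 = ((1, 0, 1) : V) then Equiv.addLeft ((0, 1, 0) : V)
        else if v.1 = ((0, 1, 1) : V) then Equiv.addLeft ((0, 0, 1) : V)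
        else 1
      | _ + 1 => 1

/-- The directed automorphism `w` with `w = (w, 1, 1, a, 1, b, c, 1)`. -/
def wAut : TreeAut fun _ => V := fun n v => wPerm n v

/-- For `k ∈ X`, the unique element `h_k` of `H = ⟨a,b,c⟩` with `h_k(0) = k`,
as a rooted automorphism of the tree. -/
def hA (k : V) : TreeAut fun _ => V := rooted (Equiv.addLeft k)

/-- The conjugates `w_k := h_k⁻¹ w h_k`, `k ∈ X`. -/
def wk (k : V) : TreeAut fun _ => V := (hA k)⁻¹ * wAut * hA k

/-- The red tetrahedron `{0, 3, 5, 6}`. -/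
def red : Set V := {(0, 0, 0), (1, 1, 0), (1, 0, 1), (0, 1, 1)}

/-- The black tetrahedron `{1, 2, 4, 7}`. -/
def black : Set V := {(1, 0, 0), (0, 1, 0), (0, 0, 1), (1, 1, 1)}

end DicePaper
set_option linter.dupNamespace false

namespace DicePaper
open TreeAut

/-- First-level permutation homomorphism. -/
def levelPerm : TreeAut (fun _ => V) →* Equiv.Perm V where
  toFun f := f 0 PUnit.unit
  map_one' := rfl
  map_mul' _ _ := rfl

lemma levelPerm_rooted (σ : Equiv.Perm V) : levelPerm (rooted σ) = σ := rfl

lemma levelPerm_w : levelPerm wAut = 1 := rfl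

lemma w_zero_apply (v : Word (fun _ => V) 0) : wAut 0 v = 1 := rfl

lemma sec_rooted (σ : Equiv.Perm V) (x : V) : sec (rooted σ) x = 1 := by
  funext n v; rfl

lemma sec_hA (k x : V) : sec (hA k) x = 1 := sec_rooted _ _

lemma wPerm_one (x : V) (v : Word (fun _ => V) 0) :
    wPerm 1 (x, v) = if x = (0 : V) then 1
      else if x = ((1, 1, 0) : V) then Equiv.addLeft ((1, 0, 0) : V)
      else if x = ((1, 0, 1) : V) then Equiv.addLeft ((0, 1, 0) : V)
      else if x = ((0, 1, 1) : V) then Equiv.addLeft ((0, 0, 1) : V)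
      else 1 := rfl

lemma wPerm_ss (n : ℕ) (x : V) (v : Word (fun k => V) (n+1)) :
    wPerm (n+2) (x, v) = if x = (0 : V) then wPerm (n+1) v else 1 := rfl

lemma sec_w_zero : sec wAut (0 : V) = wAut := by
  funext n v
  show wPerm (n+1) ((0:V), v) = wPerm n v
  match n with
  | 0 => rfl
  | n+1 => rw [wPerm_ss, if_pos rfl]

lemma sec_w_three : sec wAut ((1,1,0) : V) = aAut := by
  funext n v
  show wPerm (n+1) (((1,1,0):V), v) = aAut n v
  match n with
  | 0 => rw [wPerm_one, if_neg (by decide), if_pos rfl]; rfl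
  | n+1 => rw [wPerm_ss, if_neg (by decide)]; rfl

lemma sec_w_five : sec wAut ((1,0,1) : V) = bAut := by
  funext n v
  show wPerm (n+1) (((1,0,1):V), v) = bAut n v
  match n with
  | 0 => rw [wPerm_one, if_neg (by decide), if_neg (by decide), if_pos rfl]; rfl
  | n+1 => rw [wPerm_ss, if_neg (by decide)]; rfl

lemma sec_w_six : sec wAut ((0,1,1) : V) = cAut := by
  funext n v
  show wPerm (n+1) (((0,1,1):V), v) = cAut n v
  match n with
  | 0 => rw [wPerm_one, if_neg (by decide), if_neg (by decide), if_neg (by decide), if_pos rfl]; rfl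
  | n+1 => rw [wPerm_ss, if_neg (by decide)]; rfl

lemma rooted_mul (σ τ : Equiv.Perm V) : rooted σ * rooted τ = rooted (σ * τ) := by
  funext n v
  cases n <;> rfl

lemma addLeft_mul (x y : V) :
    Equiv.addLeft x * Equiv.addLeft y = Equiv.addLeft (x + y) := by
  apply Equiv.ext
  intro z
  show x + (y + z) = (x + y) + z
  rw [add_assoc]

lemma hA_eq (x y : V) : hA (x + y) = rooted (Equiv.addLeft x) * rooted (Equiv.addLeft y) := by
  rw [rooted_mul, addLeft_mul]; rfl

lemma hA_apply (k : V) (v : Word (fun _ => V) 0) : hA k 0 v = Equiv.addLeft k := rfl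

lemma sec_wk (k : V) : sec (wk k) (0 : V) = sec wAut k := by
  show sec ((hA k)⁻¹ * wAut * hA k) 0 = sec wAut k
  rw [sec_mul, sec_mul, sec_inv, sec_hA, sec_hA, inv_one, one_mul, mul_one]
  have h : (hA k 0 PUnit.unit) 0 = k := by
    show k + (0:V) = k
    simp
  rw [h]

lemma levelPerm_wk (k : V) : levelPerm (wk k) = 1 := by
  show levelPerm ((hA k)⁻¹ * wAut * hA k) = 1
  rw [map_mul, map_mul, map_inv, levelPerm_w, mul_one]
  simp

end DicePaper

open DicePaper in
/-- the tetrahedron group `G = ⟨w, a, b, c⟩` is infinite. -/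
theorem stmt12 :
    Infinite (Subgroup.closure {wAut, aAut, bAut, cAut} : Subgroup (TreeAut fun _ => V)) := by
  set G : Subgroup (TreeAut fun _ => V) := Subgroup.closure {wAut, aAut, bAut, cAut} with hG
  by_contra hinf
  rw [not_infinite_iff_finite] at hinf
  have hwG : wAut ∈ G := Subgroup.subset_closure (by simp)
  have haG : aAut ∈ G := Subgroup.subset_closure (by simp)
  have hbG : bAut ∈ G := Subgroup.subset_closure (by simp)
  have hcG : cAut ∈ G := Subgroup.subset_closure (by simp)
  have hwkG : ∀ k : V, hA k ∈ G → wk k ∈ G := fun k hk =>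
    mul_mem (mul_mem (inv_mem hk) hwG) hk
  have h3G : hA ((1,1,0) : V) ∈ G := by
    have h : ((1,1,0) : V) = (1,0,0) + (0,1,0) := by decide
    rw [h, hA_eq]; exact mul_mem haG hbG
  have h5G : hA ((1,0,1) : V) ∈ G := by
    have h : ((1,0,1) : V) = (1,0,0) + (0,0,1) := by decide
    rw [h, hA_eq]; exact mul_mem haG hcG
  have h6G : hA ((0,1,1) : V) ∈ G := by
    have h : ((0,1,1) : V) = (0,1,0) + (0,0,1) := by decide
    rw [h, hA_eq]; exact mul_mem hbG hcG
  haveI : Finite ↥G := hinf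
  let ψ : ↥G →* Equiv.Perm V := levelPerm.comp G.subtype
  let τ : ψ.ker →* TreeAut (fun _ => V) :=
  { toFun := fun g => TreeAut.sec ((g : ↥G) : TreeAut (fun _ => V)) 0
    map_one' := rfl
    map_mul' := fun g h => by
      have hh : (((h : ↥G) : TreeAut (fun _ => V))) 0 PUnit.unit = 1 :=
        MonoidHom.mem_ker.mp h.2
      show TreeAut.sec
        (((g : ↥G) : TreeAut (fun _ => V)) * ((h : ↥G) : TreeAut (fun _ => V))) 0 = _
      rw [TreeAut.sec_mul, hh]
      simp }
  have key : G ≤ τ.range := (Subgroup.closure_le _).mpr (by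
    intro x hx
    simp only [Set.mem_insert_iff, Set.mem_singleton_iff] at hx
    rcases hx with rfl | rfl | rfl | rfl
    · exact ⟨⟨⟨wAut, hwG⟩, MonoidHom.mem_ker.mpr levelPerm_w⟩, sec_w_zero⟩
    · exact ⟨⟨⟨wk (1,1,0), hwkG _ h3G⟩, MonoidHom.mem_ker.mpr (levelPerm_wk _)⟩,
        (sec_wk _).trans sec_w_three⟩
    · exact ⟨⟨⟨wk (1,0,1), hwkG _ h5G⟩, MonoidHom.mem_ker.mpr (levelPerm_wk _)⟩,
        (sec_wk _).trans sec_w_five⟩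
    · exact ⟨⟨⟨wk (0,1,1), hwkG _ h6G⟩, MonoidHom.mem_ker.mpr (levelPerm_wk _)⟩,
        (sec_wk _).trans sec_w_six⟩)
  have hcard := Subgroup.card_eq_card_quotient_mul_card_subgroup (ψ.ker)
  have hq : Nat.card (↥G ⧸ ψ.ker) = Nat.card ψ.range :=
    Nat.card_congr (QuotientGroup.quotientKerEquivRange ψ).toEquiv
  have hr : 2 ≤ Nat.card ψ.range := by
    have hnt : Nontrivial ψ.range := by
      refine ⟨⟨⟨Equiv.addLeft ((1,0,0):V), ⟨⟨aAut, haG⟩, rfl⟩⟩, 1, ?_⟩⟩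
      intro h
      have h2 := congrArg (fun e => (e : Equiv.Perm V) (0:V)) (Subtype.ext_iff.mp h)
      simp only [Equiv.Perm.one_apply, Equiv.coe_addLeft] at h2
      exact (by decide : ¬ ((1,0,0) : V) + 0 = 0) h2
    have := Finite.one_lt_card_iff_nontrivial.mpr hnt
    omega
  have hker_le : Nat.card ↥G ≤ Nat.card ψ.ker := by
    haveI : Finite τ.range := Finite.of_surjective _ τ.rangeRestrict_surjective
    calc Nat.card ↥G ≤ Nat.card τ.range := Subgroup.card_le_of_le key
      _ ≤ Nat.card ψ.ker := Nat.card_le_card_of_surjective _ τ.rangeRestrict_surjective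
  have hpos : 0 < Nat.card ↥G := Nat.card_pos
  have h2 : 2 * Nat.card ψ.ker ≤ Nat.card ↥G := by
    calc 2 * Nat.card ψ.ker ≤ Nat.card ψ.range * Nat.card ψ.ker :=
      Nat.mul_le_mul_right _ hr
      _ = Nat.card ↥G := by rw [hcard, hq]
  omega
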